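/- Let R be a commutative ring, h ∈ R⟦t⟧, and let u, v ∈ R⟦t⟧ both have constant term 0. If v ≡ u (mod t^n) for some n ≥ 1, then h(v) ≡ h(u) + h'(u)·(v - u) (mod t^{2n}), where h(u), h(v) denote composition of power series and h' the formal derivative. -/

import Mathlib

open PowerSeries

/-- Composition `h(u)` of formal power series, intended for `u` with zero constant term. -/
noncomputable def pcomp {R : Type*} [CommSemiring R] (h u : R⟦X⟧) : R⟦X⟧ :=
  PowerSeries.mk fun n => ∑ i ∈ Finset.range (n + 1), coeff (R := R) i h * coeff (R := R) n (u ^ i)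

/-! Since `t^i ∣ u^i`, modulo `t^N` the series `h(u)` only sees the truncation of `h` below degree
`N`. For a polynomial `p` one has `p(u + d) = p(u) + p'(u) d + k d²`, and with `d = v - u ≡ 0 (mod t^n)`
the last term vanishes modulo `t^{2n}`. -/

theorem X_pow_dvd_pcomp_sub_eval₂_trunc {R : Type*} [CommRing R] (h u : R⟦X⟧)
    (hu : constantCoeff u = 0) (N : ℕ) :
    (X : R⟦X⟧) ^ N ∣ pcomp h u - (trunc N h).eval₂ C u := by
  rw [X_pow_dvd_iff]
  intro i hi
  rw [map_sub, sub_eq_zero, eval₂_trunc_eq_sum_range, map_sum, pcomp, coeff_mk]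
  simp only [coeff_C_mul]
  refine Finset.sum_subset (Finset.range_subset_range.mpr hi) fun j _ hj => ?_
  have hij : i < j := by simpa using hj
  rw [X_pow_dvd_iff.mp (pow_dvd_pow_of_dvd (X_dvd_iff.mpr hu) j) i hij, mul_zero]

theorem X_pow_two_mul_dvd_pcomp_sub_first_order {R : Type*} [CommRing R] (h u v : R⟦X⟧)
    (hu : constantCoeff u = 0) (hv : constantCoeff v = 0) (n : ℕ)
    (hd : (X : R⟦X⟧) ^ n ∣ v - u) :
    (X : R⟦X⟧) ^ (2 * n) ∣ pcomp h v - (pcomp h u + pcomp (d⁄dX R h) u * (v - u)) := by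
  have hd_sq : (X : R⟦X⟧) ^ (2 * n) ∣ (v - u) ^ 2 := by
    rw [mul_comm, pow_mul]
    exact pow_dvd_pow_of_dvd hd 2
  set P := (trunc (2 * n + 1) h).map C
  obtain ⟨k, hk⟩ := P.binomExpansion u (v - u)
  rw [add_sub_cancel] at hk
  have hP : ∀ w : R⟦X⟧, constantCoeff w = 0 → (X : R⟦X⟧) ^ (2 * n) ∣ pcomp h w - P.eval w :=
    fun w hw => (pow_dvd_pow X (2 * n).le_succ).trans <| by
      rw [Polynomial.eval_map]
      exact X_pow_dvd_pcomp_sub_eval₂_trunc h w hw _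
  have hP' : (X : R⟦X⟧) ^ (2 * n) ∣ pcomp (d⁄dX R h) u - P.derivative.eval u := by
    rw [Polynomial.derivative_map, Polynomial.eval_map, ← trunc_derivative]
    exact X_pow_dvd_pcomp_sub_eval₂_trunc _ u hu _
  have e : pcomp h v - (pcomp h u + pcomp (d⁄dX R h) u * (v - u)) =
      (pcomp h v - P.eval v) - (pcomp h u - P.eval u)
        - (pcomp (d⁄dX R h) u - P.derivative.eval u) * (v - u) + k * (v - u) ^ 2 := by
    linear_combination hk
  rw [e]
  exact ((dvd_sub (hP v hv) (hP u hu)).sub (hP'.mul_right _)).add (hd_sq.mul_left k)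

theorem stmt3_general {R : Type*} [CommRing R] (h u v : R⟦X⟧)
    (hu : constantCoeff (R := R) u = 0) (hv : constantCoeff (R := R) v = 0)
    (n : ℕ)
    (hcong : ∀ i < n, coeff (R := R) i v = coeff (R := R) i u) :
    ∀ i < 2 * n,
      coeff (R := R) i (pcomp h v) =
        coeff (R := R) i (pcomp h u + pcomp (derivativeFun h) u * (v - u)) := by
  have hd : (X : R⟦X⟧) ^ n ∣ v - u :=
    X_pow_dvd_iff.mpr fun i hi => by rw [map_sub, hcong i hi, sub_self]
  intro i hi
  rw [← sub_eq_zero, ← map_sub]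
  exact X_pow_dvd_iff.mp (X_pow_two_mul_dvd_pcomp_sub_first_order h u v hu hv n hd) i hi

/-- first-order expansion of composition:
if `v ≡ u (mod t^n)` then `h(v) ≡ h(u) + h'(u)·(v - u) (mod t^{2n})`. -/
theorem stmt3 {R : Type*} [CommRing R] (h u v : R⟦X⟧)
    (hu : constantCoeff (R := R) u = 0) (hv : constantCoeff (R := R) v = 0)
    (n : ℕ) (hn : 1 ≤ n)
    (hcong : ∀ i < n, coeff (R := R) i v = coeff (R := R) i u) :
    ∀ i < 2 * n,
      coeff (R := R) i (pcomp h v) =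
        coeff (R := R) i (pcomp h u + pcomp (derivativeFun h) u * (v - u)) :=
  stmt3_general h u v hu hv n hcong
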